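/- Let u be a smooth solution of ∂ₜu + ∂ₓ³u = μ∂ₓ(|u|^{2α}u) and set v := J(t)u + 3μt|u|^{2α}u with J(t) = x - 3t∂ₓ². Then v solves ∂ₜv + ∂ₓ³v = (2α+1)μ|u|^{2α}∂ₓv - 2(α-1)μ|u|^{2α}u. -/

import Mathlib

noncomputable def px (G : ℝ × ℝ → ℝ) : ℝ × ℝ → ℝ := fun p => fderiv ℝ G p (0, 1)
noncomputable def pt (G : ℝ × ℝ → ℝ) : ℝ × ℝ → ℝ := fun p => fderiv ℝ G p (1, 0)

lemma contDiff_px {G : ℝ × ℝ → ℝ} (hG : ContDiff ℝ (⊤ : ℕ∞) G) : ContDiff ℝ (⊤ : ℕ∞) (px G) :=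
  ((hG.fderiv_right (by simp)).clm_apply contDiff_const)

lemma contDiff_pt {G : ℝ × ℝ → ℝ} (hG : ContDiff ℝ (⊤ : ℕ∞) G) : ContDiff ℝ (⊤ : ℕ∞) (pt G) :=
  ((hG.fderiv_right (by simp)).clm_apply contDiff_const)

lemma hasDerivAt_snd {G : ℝ × ℝ → ℝ} (hG : ContDiff ℝ (⊤ : ℕ∞) G) (t x : ℝ) :
    HasDerivAt (fun y => G (t, y)) (px G (t, x)) x := by
  have h1 : HasFDerivAt G (fderiv ℝ G (t, x)) (t, x) :=
    (hG.differentiable (by simp) (t, x)).hasFDerivAt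
  have h2 : HasDerivAt (fun y : ℝ => ((t, y) : ℝ × ℝ)) ((0 : ℝ), (1 : ℝ)) x :=
    (hasDerivAt_const x t).prodMk (hasDerivAt_id x)
  exact h1.comp_hasDerivAt x h2

lemma hasDerivAt_fst {G : ℝ × ℝ → ℝ} (hG : ContDiff ℝ (⊤ : ℕ∞) G) (t x : ℝ) :
    HasDerivAt (fun s => G (s, x)) (pt G (t, x)) t := by
  have h1 : HasFDerivAt G (fderiv ℝ G (t, x)) (t, x) :=
    (hG.differentiable (by simp) (t, x)).hasFDerivAt
  have h2 : HasDerivAt (fun s : ℝ => ((s, x) : ℝ × ℝ)) ((1 : ℝ), (0 : ℝ)) t :=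
    (hasDerivAt_id t).prodMk (hasDerivAt_const t x)
  exact h1.comp_hasDerivAt t h2

lemma pd_swap {G : ℝ × ℝ → ℝ} (hG : ContDiff ℝ (⊤ : ℕ∞) G) (p : ℝ × ℝ) :
    pt (px G) p = px (pt G) p := by
  have hd1 : Differentiable ℝ G := hG.differentiable (by simp)
  have hd2 : Differentiable ℝ (fderiv ℝ G) :=
    (hG.fderiv_right (m := (⊤ : ℕ∞)) (by simp)).differentiable (by simp)
  have hF2 : HasFDerivAt (fderiv ℝ G) (fderiv ℝ (fderiv ℝ G) p) p :=
    (hd2 p).hasFDerivAt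
  have hsymm := second_derivative_symmetric (fun y => (hd1 y).hasFDerivAt) hF2
  have h1 : HasFDerivAt (px G)
      ((ContinuousLinearMap.apply ℝ ℝ (((0 : ℝ), (1 : ℝ)) : ℝ × ℝ)).comp
        (fderiv ℝ (fderiv ℝ G) p)) p :=
    (ContinuousLinearMap.apply ℝ ℝ (((0 : ℝ), (1 : ℝ)) : ℝ × ℝ)).hasFDerivAt.comp p hF2
  have h2 : HasFDerivAt (pt G)
      ((ContinuousLinearMap.apply ℝ ℝ (((1 : ℝ), (0 : ℝ)) : ℝ × ℝ)).comp
        (fderiv ℝ (fderiv ℝ G) p)) p :=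
    (ContinuousLinearMap.apply ℝ ℝ (((1 : ℝ), (0 : ℝ)) : ℝ × ℝ)).hasFDerivAt.comp p hF2
  show fderiv ℝ (px G) p (1, 0) = fderiv ℝ (pt G) p (0, 1)
  rw [h1.fderiv, h2.fderiv]
  simpa using hsymm (1, 0) (0, 1)

lemma hasDerivAt_abs_rpow_mul (α : ℝ) (hα : 0 < α) (y : ℝ) :
    HasDerivAt (fun z : ℝ => |z| ^ (2 * α) * z) ((2 * α + 1) * |y| ^ (2 * α)) y := by
  rcases lt_trichotomy y 0 with hy | rfl | hy
  · have hneg : HasDerivAt (fun z : ℝ => -z) (-1) y := (hasDerivAt_id y).neg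
    have h2 : HasDerivAt (fun z : ℝ => (-z) ^ (2 * α)) ((2 * α) * (-y) ^ (2 * α - 1) * (-1)) y :=
      (Real.hasDerivAt_rpow_const (p := 2 * α) (Or.inl (by linarith : -y ≠ 0))).comp y hneg
    have h3 := h2.mul (hasDerivAt_id y)
    have h4 : HasDerivAt (fun z : ℝ => (-z) ^ (2 * α) * z) ((2 * α + 1) * |y| ^ (2 * α)) y := by
      refine h3.congr_deriv ?_
      have hy' : (0 : ℝ) < -y := by linarith
      have h5 : (-y) ^ (2 * α) = (-y) ^ (2 * α - 1) * (-y) := by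
        rw [← Real.rpow_add_one hy'.ne' (2 * α - 1)]
        norm_num
      simp only [id_eq]
      rw [abs_of_neg hy, h5]
      ring
    apply h4.congr_of_eventuallyEq
    filter_upwards [eventually_lt_nhds hy] with z hz
    rw [abs_of_neg hz]
  · have h0 : (2 * α + 1) * |(0 : ℝ)| ^ (2 * α) = 0 := by
      rw [abs_zero, Real.zero_rpow (by positivity : 2 * α ≠ 0), mul_zero]
    rw [h0, hasDerivAt_iff_tendsto_slope]
    have hcont : Filter.Tendsto (fun z : ℝ => |z| ^ (2 * α)) (nhds 0) (nhds 0) := by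
      have : ContinuousAt (fun z : ℝ => |z| ^ (2 * α)) 0 := by
        have h1 : ContinuousAt (fun w : ℝ => w ^ (2 * α)) (|(0 : ℝ)|) := by
          rw [abs_zero]
          exact Real.continuousAt_rpow_const 0 (2 * α) (Or.inr (by positivity))
        exact h1.comp (continuous_abs.continuousAt)
      simpa [Real.zero_rpow (by positivity : 2 * α ≠ 0)] using this.tendsto
    apply (hcont.mono_left nhdsWithin_le_nhds).congr'
    filter_upwards [self_mem_nhdsWithin] with z hz
    have hz' : z ≠ 0 := hz
    show |z| ^ (2 * α) = slope (fun z : ℝ => |z| ^ (2 * α) * z) 0 z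
    rw [slope_def_field]
    rw [abs_zero, Real.zero_rpow (by positivity : 2 * α ≠ 0)]
    field_simp
    ring
  · have h2 : HasDerivAt (fun z : ℝ => z ^ (2 * α)) ((2 * α) * y ^ (2 * α - 1)) y :=
      Real.hasDerivAt_rpow_const (Or.inl (ne_of_gt hy))
    have h3 := h2.mul (hasDerivAt_id y)
    have h4 : HasDerivAt (fun z : ℝ => z ^ (2 * α) * z) ((2 * α + 1) * |y| ^ (2 * α)) y := by
      refine h3.congr_deriv ?_
      have h5 : y ^ (2 * α) = y ^ (2 * α - 1) * y := by
        rw [← Real.rpow_add_one (ne_of_gt hy) (2 * α - 1)]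
        norm_num
      simp only [id_eq]
      rw [abs_of_pos hy, h5]
      ring
    apply h4.congr_of_eventuallyEq
    filter_upwards [eventually_gt_nhds hy] with z hz
    rw [abs_of_pos hz]
/-- Time derivative `∂ₜ`. -/
noncomputable def dt (u : ℝ → ℝ → ℝ) : ℝ → ℝ → ℝ := fun t x => deriv (fun s => u s x) t

/-- Space derivative `∂ₓ`. -/
noncomputable def dx (u : ℝ → ℝ → ℝ) : ℝ → ℝ → ℝ := fun t x => deriv (fun y => u t y) x

/-- If `u` is a smooth solution of `∂ₜu + ∂ₓ³u = μ∂ₓ(|u|^{2α}u)` and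
`v = J(t)u + 3μt|u|^{2α}u` with `J(t) = x - 3t∂ₓ²`, then
`∂ₜv + ∂ₓ³v = (2α+1)μ|u|^{2α}∂ₓv - 2(α-1)μ|u|^{2α}u`. -/
theorem v_equation (μ α : ℝ) (hμ : μ ≠ 0) (hα : 0 < α)
    (u : ℝ → ℝ → ℝ) (hu : ContDiff ℝ (⊤ : ℕ∞) (Function.uncurry u))
    (heq : ∀ t x, dt u t x + dx (dx (dx u)) t x =
      μ * dx (fun t x => |u t x| ^ (2 * α) * u t x) t x)
    (v : ℝ → ℝ → ℝ)
    (hv : v = fun t x =>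
      x * u t x - 3 * t * dx (dx u) t x + 3 * μ * t * (|u t x| ^ (2 * α) * u t x)) :
    ∀ t x, dt v t x + dx (dx (dx v)) t x =
      (2 * α + 1) * μ * |u t x| ^ (2 * α) * dx v t x -
        2 * (α - 1) * μ * (|u t x| ^ (2 * α) * u t x) := by
  have hFx : ContDiff ℝ (⊤ : ℕ∞) (px (Function.uncurry u)) := contDiff_px hu
  have hFxx : ContDiff ℝ (⊤ : ℕ∞) (px (px (Function.uncurry u))) := contDiff_px hFx
  have hFxxx : ContDiff ℝ (⊤ : ℕ∞) (px (px (px (Function.uncurry u)))) := contDiff_px hFxx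
  have hFt : ContDiff ℝ (⊤ : ℕ∞) (pt (Function.uncurry u)) := contDiff_pt hu
  have hFxt : ContDiff ℝ (⊤ : ℕ∞) (px (pt (Function.uncurry u))) := contDiff_px hFt
  -- dictionary between `dx`/`dt` and `px`/`pt`
  have d1 : ∀ t x, dx u t x = px (Function.uncurry u) (t, x) :=
    fun t x => (hasDerivAt_snd hu t x).deriv
  have d2 : ∀ t x, dx (dx u) t x = px (px (Function.uncurry u)) (t, x) := by
    intro t x
    have h : (fun y => dx u t y) = fun y => px (Function.uncurry u) (t, y) :=
      funext fun y => d1 t y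
    show deriv (fun y => dx u t y) x = _
    rw [h]
    exact (hasDerivAt_snd hFx t x).deriv
  have d3 : ∀ t x, dx (dx (dx u)) t x = px (px (px (Function.uncurry u))) (t, x) := by
    intro t x
    have h : (fun y => dx (dx u) t y) = fun y => px (px (Function.uncurry u)) (t, y) :=
      funext fun y => d2 t y
    show deriv (fun y => dx (dx u) t y) x = _
    rw [h]
    exact (hasDerivAt_snd hFxx t x).deriv
  have dt1 : ∀ t x, dt u t x = pt (Function.uncurry u) (t, x) :=
    fun t x => (hasDerivAt_fst hu t x).deriv
  -- chain rule for the nonlinearity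
  have hwx : ∀ t x, HasDerivAt (fun y => |u t y| ^ (2 * α) * u t y)
      ((2 * α + 1) * |u t x| ^ (2 * α) * px (Function.uncurry u) (t, x)) x := by
    intro t x
    have h := (hasDerivAt_abs_rpow_mul α hα (u t x)).comp x (hasDerivAt_snd hu t x)
    exact h
  have heq' : ∀ t x, pt (Function.uncurry u) (t, x)
      + px (px (px (Function.uncurry u))) (t, x)
      = μ * ((2 * α + 1) * |u t x| ^ (2 * α) * px (Function.uncurry u) (t, x)) := by
    intro t x
    have h := heq t x
    rw [dt1 t x, d3 t x] at h
    rwa [show dx (fun t x => |u t x| ^ (2 * α) * u t x) t x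
        = (2 * α + 1) * |u t x| ^ (2 * α) * px (Function.uncurry u) (t, x) from
      (hwx t x).deriv] at h
  -- first space derivative of v
  have hdxv : ∀ t y, HasDerivAt (fun z => v t z)
      (u t y + y * px (Function.uncurry u) (t, y)
        - 3 * t * px (px (px (Function.uncurry u))) (t, y)
        + 3 * μ * t * ((2 * α + 1) * |u t y| ^ (2 * α) * px (Function.uncurry u) (t, y))) y := by
    intro t y
    have hveq : (fun z => v t z) = fun z => z * u t z
        - 3 * t * px (px (Function.uncurry u)) (t, z)
        + 3 * μ * t * (|u t z| ^ (2 * α) * u t z) := by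
      funext z
      simp only [hv]
      rw [d2 t z]
    rw [hveq]
    have h1 : HasDerivAt (fun z : ℝ => z * u t z)
        (1 * u t y + y * px (Function.uncurry u) (t, y)) y :=
      (hasDerivAt_id y).mul (hasDerivAt_snd hu t y)
    have h2 : HasDerivAt (fun z : ℝ => px (px (Function.uncurry u)) (t, z))
        (px (px (px (Function.uncurry u))) (t, y)) y := hasDerivAt_snd hFxx t y
    have h := (h1.sub (h2.const_mul (3 * t))).add ((hwx t y).const_mul (3 * μ * t))
    refine h.congr_deriv ?_
    ring
  have dxveq : ∀ t y, dx v t y = u t y + y * px (Function.uncurry u) (t, y)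
      - 3 * t * px (px (px (Function.uncurry u))) (t, y)
      + 3 * μ * t * ((2 * α + 1) * |u t y| ^ (2 * α) * px (Function.uncurry u) (t, y)) :=
    fun t y => (hdxv t y).deriv
  have dxv' : ∀ t y, dx v t y = u t y + y * px (Function.uncurry u) (t, y)
      - 3 * t * px (px (px (Function.uncurry u))) (t, y)
      + 3 * t * (pt (Function.uncurry u) (t, y)
        + px (px (px (Function.uncurry u))) (t, y)) := by
    intro t y
    rw [dxveq t y]
    linear_combination (-3 * t) * heq' t y
  -- second space derivative of v
  have hdxxv : ∀ t y, HasDerivAt (fun z => dx v t z)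
      (2 * px (Function.uncurry u) (t, y) + y * px (px (Function.uncurry u)) (t, y)
        + 3 * t * px (pt (Function.uncurry u)) (t, y)) y := by
    intro t y
    have hdeq : (fun z => dx v t z) = fun z => u t z
        + z * px (Function.uncurry u) (t, z)
        - 3 * t * px (px (px (Function.uncurry u))) (t, z)
        + 3 * t * (pt (Function.uncurry u) (t, z)
          + px (px (px (Function.uncurry u))) (t, z)) :=
      funext fun z => dxv' t z
    rw [hdeq]
    have h0 : HasDerivAt (fun z : ℝ => u t z) (px (Function.uncurry u) (t, y)) y :=
      hasDerivAt_snd hu t y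
    have h1 : HasDerivAt (fun z : ℝ => z * px (Function.uncurry u) (t, z))
        (1 * px (Function.uncurry u) (t, y) + y * px (px (Function.uncurry u)) (t, y)) y :=
      (hasDerivAt_id y).mul (hasDerivAt_snd hFx t y)
    have h2 : HasDerivAt (fun z : ℝ => px (px (px (Function.uncurry u))) (t, z))
        (px (px (px (px (Function.uncurry u)))) (t, y)) y := hasDerivAt_snd hFxxx t y
    have h3 : HasDerivAt (fun z : ℝ => pt (Function.uncurry u) (t, z)
          + px (px (px (Function.uncurry u))) (t, z))
        (px (pt (Function.uncurry u)) (t, y)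
          + px (px (px (px (Function.uncurry u)))) (t, y)) y :=
      (hasDerivAt_snd hFt t y).add h2
    have h := ((h0.add h1).sub (h2.const_mul (3 * t))).add (h3.const_mul (3 * t))
    refine h.congr_deriv ?_
    ring
  have dxxveq : ∀ t y, dx (dx v) t y = 2 * px (Function.uncurry u) (t, y)
      + y * px (px (Function.uncurry u)) (t, y)
      + 3 * t * px (pt (Function.uncurry u)) (t, y) :=
    fun t y => (hdxxv t y).deriv
  -- third space derivative of v
  have hdxxxv : ∀ t x, HasDerivAt (fun z => dx (dx v) t z)
      (3 * px (px (Function.uncurry u)) (t, x) + x * px (px (px (Function.uncurry u))) (t, x)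
        + 3 * t * px (px (pt (Function.uncurry u))) (t, x)) x := by
    intro t x
    have hdeq : (fun z => dx (dx v) t z) = fun z => 2 * px (Function.uncurry u) (t, z)
        + z * px (px (Function.uncurry u)) (t, z)
        + 3 * t * px (pt (Function.uncurry u)) (t, z) :=
      funext fun z => dxxveq t z
    rw [hdeq]
    have h1 := (hasDerivAt_snd hFx t x).const_mul (2 : ℝ)
    have h2 := (hasDerivAt_id x).mul (hasDerivAt_snd hFxx t x)
    have h3 := (hasDerivAt_snd hFxt t x).const_mul (3 * t)
    have h := (h1.add h2).add h3
    refine h.congr_deriv ?_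
    simp only [id_eq]
    ring
  have dxxxveq : ∀ t x, dx (dx (dx v)) t x = 3 * px (px (Function.uncurry u)) (t, x)
      + x * px (px (px (Function.uncurry u))) (t, x)
      + 3 * t * px (px (pt (Function.uncurry u))) (t, x) :=
    fun t x => (hdxxxv t x).deriv
  -- time derivative of v
  have hdtv : ∀ t x, HasDerivAt (fun s => v s x)
      (x * pt (Function.uncurry u) (t, x)
        - (3 * px (px (Function.uncurry u)) (t, x)
          + 3 * t * pt (px (px (Function.uncurry u))) (t, x))
        + (3 * μ * (|u t x| ^ (2 * α) * u t x)
          + 3 * μ * t * ((2 * α + 1) * |u t x| ^ (2 * α) * pt (Function.uncurry u) (t, x)))) t := by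
    intro t x
    have hveq : (fun s => v s x) = fun s => x * u s x
        - 3 * s * px (px (Function.uncurry u)) (s, x)
        + 3 * μ * s * (|u s x| ^ (2 * α) * u s x) := by
      funext s
      simp only [hv]
      rw [d2 s x]
    rw [hveq]
    have h1 : HasDerivAt (fun s : ℝ => x * u s x) (x * pt (Function.uncurry u) (t, x)) t :=
      (hasDerivAt_fst hu t x).const_mul x
    have ha : HasDerivAt (fun s : ℝ => 3 * s) 3 t := by
      simpa using (hasDerivAt_id t).const_mul (3 : ℝ)
    have h2 : HasDerivAt (fun s : ℝ => 3 * s * px (px (Function.uncurry u)) (s, x))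
        (3 * px (px (Function.uncurry u)) (t, x)
          + 3 * t * pt (px (px (Function.uncurry u))) (t, x)) t := by
      exact ha.mul (hasDerivAt_fst hFxx t x)
    have hb : HasDerivAt (fun s : ℝ => 3 * μ * s) (3 * μ) t := by
      simpa using (hasDerivAt_id t).const_mul (3 * μ)
    have h3w : HasDerivAt (fun s : ℝ => |u s x| ^ (2 * α) * u s x)
        ((2 * α + 1) * |u t x| ^ (2 * α) * pt (Function.uncurry u) (t, x)) t :=
      by
        have h := (hasDerivAt_abs_rpow_mul α hα (u t x)).comp t (hasDerivAt_fst hu t x)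
        exact h
    have h3 : HasDerivAt (fun s : ℝ => 3 * μ * s * (|u s x| ^ (2 * α) * u s x))
        (3 * μ * (|u t x| ^ (2 * α) * u t x)
          + 3 * μ * t * ((2 * α + 1) * |u t x| ^ (2 * α) * pt (Function.uncurry u) (t, x))) t := by
      exact hb.mul h3w
    exact (h1.sub h2).add h3
  have dtveq : ∀ t x, dt v t x = x * pt (Function.uncurry u) (t, x)
      - (3 * px (px (Function.uncurry u)) (t, x)
        + 3 * t * pt (px (px (Function.uncurry u))) (t, x))
      + (3 * μ * (|u t x| ^ (2 * α) * u t x)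
        + 3 * μ * t * ((2 * α + 1) * |u t x| ^ (2 * α) * pt (Function.uncurry u) (t, x))) :=
    fun t x => (hdtv t x).deriv
  -- Clairaut swap
  have swap : ∀ t x, pt (px (px (Function.uncurry u))) (t, x)
      = px (px (pt (Function.uncurry u))) (t, x) := by
    intro t x
    rw [pd_swap hFx (t, x)]
    have h : pt (px (Function.uncurry u)) = px (pt (Function.uncurry u)) :=
      funext fun q => pd_swap hu q
    rw [h]
  -- assemble
  intro t x
  rw [dtveq t x, dxxxveq t x, dxveq t x, swap t x]
  linear_combination (x + 3 * t * (2 * α + 1) * μ * |u t x| ^ (2 * α)) * heq' t x
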